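/- arXiv:1106.2647 — 2 statements merged into one kernel-verified Lean document; each statement's English description precedes it below -/
import Mathlib

section
/- Every instance over the signature S of axiom scheme C5 (Reversibility): ([X⃗←x⃗; W←w](Y = y) ∧ [X⃗←x⃗; Y←y](W = w)) → [X⃗←x⃗](Y = y), for distinct endogenous variables Y ≠ W not occurring in X⃗, is valid with respect to the class Mrec(Φ_S) of recursive counterfactual structures. -/
/-! ## Signatures -/

structure Signature where
  exo : Type
  endo : Type
  exoFin : Fintype exo
  endoFin : Fintype endo
  endoDec : DecidableEq endo
  exoRange : exo → Type
  range : endo → Type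
  exoRangeFin : ∀ u, Fintype (exoRange u)
  rangeFin : ∀ X, Fintype (range X)
  exoRangeNe : ∀ u, Nonempty (exoRange u)
  rangeNe : ∀ X, Nonempty (range X)

attribute [instance] Signature.exoFin Signature.endoFin Signature.endoDec
  Signature.exoRangeFin Signature.rangeFin Signature.exoRangeNe Signature.rangeNe

/-- A context: an assignment of values to the exogenous variables. -/
abbrev Signature.Ctx (S : Signature) : Type := ∀ u : S.exo, S.exoRange u

/-- An assignment of values to the endogenous variables. -/
abbrev Signature.Asgn (S : Signature) : Type := ∀ X : S.endo, S.range X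

/-- An intervention `Y⃗ ← y⃗`: a partial assignment of values to (distinct)
endogenous variables. -/
abbrev Signature.Intervention (S : Signature) : Type := ∀ X : S.endo, Option (S.range X)

/-- The primitive propositions Φ_S : propositions `X = x` for `X ∈ V`, `x ∈ R(X)`. -/
abbrev Signature.Atom (S : Signature) : Type := Σ X : S.endo, S.range X

/-! ## Counterfactual structures -/

/-- A counterfactual structure over the primitive propositions `Φ`:
a finite set of worlds, a valuation, and a ternary relation `R`,
where `R w u v` means `u ⪯_w v`. -/
structure CStruct (Φ : Type) where
  World : Type
  worldFin : Fintype World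
  val : World → Φ → Prop
  R : World → World → World → Prop
  self_mem : ∀ w, ∃ v, R w w v
  refl_on : ∀ w u, (∃ v, R w u v) → R w u u
  trans_on : ∀ w u v x, (∃ y, R w u y) → (∃ y, R w v y) → (∃ y, R w x y) →
    R w u v → R w v x → R w u x
  centered : ∀ w u, u ≠ w → (R w w u ∧ ¬ R w u w)

attribute [instance] CStruct.worldFin

namespace CStruct

variable {Φ : Type} (M : CStruct Φ)

/-- `u ∈ W_w` : `u ⪯_w v` for some `v`. -/
def inW (w u : M.World) : Prop := ∃ v, M.R w u v

/-- `u ≺_w v` : `u ⪯_w v` and not `v ⪯_w u`. -/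
def lt (w u v : M.World) : Prop := M.R w u v ∧ ¬ M.R w v u

/-- The set of worlds in `W_w` satisfying `A` that are closest to `w`. -/
def closest (w : M.World) (A : M.World → Prop) : Set M.World :=
  {v | M.inW w v ∧ A v ∧ ∀ v', A v' → ¬ M.lt w v' v}

/-- `(M,w) ⊨ A > B` : every closest world to `w` satisfying `A` satisfies `B`. -/
def cfSat (w : M.World) (A B : M.World → Prop) : Prop :=
  ∀ v ∈ M.closest w A, B v

/-- Membership in `M⁺`: each `≺_w` is a strict total order on `W_w`. -/
def totalOrd : Prop :=
  ∀ w u v, M.inW w u → M.inW w v → u ≠ v → M.lt w u v ∨ M.lt w v u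

end CStruct

/-! ## Acceptable and full structures over Φ_S -/

/-- At every world, for each variable `X` exactly one proposition `X = x` is true. -/
def Acceptable (S : Signature) (M : CStruct S.Atom) : Prop :=
  ∀ (w : M.World) (X : S.endo), ∃! x : S.range X, M.val w ⟨X, x⟩

/-- Every assignment of values to the endogenous variables is realized at some
world of `W_w`, for every world `w`. -/
def Full (S : Signature) (M : CStruct S.Atom) : Prop :=
  ∀ (w : M.World) (a : S.Asgn), ∃ v, M.inW w v ∧ ∀ X : S.endo, M.val v ⟨X, a X⟩

/-- The antecedent `Y⃗ = y⃗` (a conjunction of atoms) of the counterfactual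
corresponding to the intervention `g`, as a predicate on worlds. -/
def intAnte (S : Signature) (M : CStruct S.Atom) (g : S.Intervention) :
    M.World → Prop :=
  fun v => ∀ (Y : S.endo) (y : S.range Y), g Y = some y → M.val v ⟨Y, y⟩

/-- `(M,w) ⊨ [Y⃗ ← y⃗](X = x)`, read as the counterfactual
`(Y₁ = y₁ ∧ ... ∧ Y_k = y_k) > (X = x)`. -/
def satBasic (S : Signature) (M : CStruct S.Atom) (w : M.World)
    (g : S.Intervention) (X : S.endo) (x : S.range X) : Prop :=
  M.cfSat w (intAnte S M g) (fun v => M.val v ⟨X, x⟩)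

/-- Recursive counterfactual structures `Mrec(Φ_S)`: full acceptable structures in
`M⁺` such that for each world there is a strict total order `≺` on the endogenous
variables such that if `W' ≺ Y` then setting `Y` (in addition to `X⃗`) does not
change the value of `W'` at the closest world. -/
def MRec (S : Signature) (M : CStruct S.Atom) : Prop :=
  Acceptable S M ∧ Full S M ∧ M.totalOrd ∧
  ∀ w : M.World, ∃ vlt : S.endo → S.endo → Prop, IsStrictTotalOrder S.endo vlt ∧
    ∀ W' Y : S.endo, vlt W' Y →
      ∀ g : S.Intervention, g W' = none → g Y = none →
        ∀ (y : S.range Y) (w' : S.range W'),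
          (satBasic S M w (Function.update g Y (some y)) W' w' ↔ satBasic S M w g W' w')

/-! ## Causal models -/

/-- A causal model over `S`: for each endogenous variable `X`, a structural
equation `F_X` mapping the values of all the other variables to a value of `X`. -/
structure CausalModel (S : Signature) where
  F : ∀ X : S.endo, S.Ctx → (∀ Y : {Y : S.endo // Y ≠ X}, S.range Y.1) → S.range X

namespace CausalModel

variable {S : Signature}

/-- `a` is a solution of the equations of `T_{g}` in context `u`. -/
def isSolution (T : CausalModel S) (g : S.Intervention) (u : S.Ctx) (a : S.Asgn) : Prop :=
  ∀ X : S.endo,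
    (∀ x : S.range X, g X = some x → a X = x) ∧
    (g X = none → a X = T.F X u (fun Y => a Y.1))

/-- `T` is recursive (acyclic): membership in `Trec(S)`. -/
def Recursive (T : CausalModel S) : Prop :=
  ∃ vlt : S.endo → S.endo → Prop, IsStrictTotalOrder S.endo vlt ∧
    ∀ X Y : S.endo, vlt X Y →
      ∀ (u : S.Ctx) (a a' : ∀ Z : {Z : S.endo // Z ≠ X}, S.range Z.1),
        (∀ Z : {Z : S.endo // Z ≠ X}, Z.1 ≠ Y → a Z = a' Z) →
        T.F X u a = T.F X u a'

/-- Membership in `Tun(S)`: all the equations of every `T_{X⃗ ← x⃗}` have a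
unique solution in every context. -/
def UniqueSolutions (T : CausalModel S) : Prop :=
  ∀ (g : S.Intervention) (u : S.Ctx), ∃! a : S.Asgn, T.isSolution g u a

end CausalModel

/-! ## The language Lprop(S) -/

/-- `Lprop(S)`: Boolean combinations of basic formulas `[Y⃗ ← y⃗](X = x)`. -/
inductive LProp (S : Signature) : Type
  | basic (g : S.Intervention) (X : S.endo) (x : S.range X) : LProp S
  | neg : LProp S → LProp S
  | and : LProp S → LProp S → LProp S

/-- Satisfaction of `Lprop(S)` formulas in a causal model, relative to a context. -/
def CausalModel.sat {S : Signature} (T : CausalModel S) (u : S.Ctx) : LProp S → Prop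
  | .basic g X x => ∀ a : S.Asgn, T.isSolution g u a → a X = x
  | .neg φ => ¬ CausalModel.sat T u φ
  | .and φ ψ => CausalModel.sat T u φ ∧ CausalModel.sat T u ψ

/-- Satisfaction of `Lprop(S)` formulas in a counterfactual structure over `Φ_S`. -/
def satL {S : Signature} (M : CStruct S.Atom) (w : M.World) : LProp S → Prop
  | .basic g X x => satBasic S M w g X x
  | .neg φ => ¬ satL M w φ
  | .and φ ψ => satL M w φ ∧ satL M w ψ

namespace LProp

variable {S : Signature}

def imp (φ ψ : LProp S) : LProp S := .neg (.and φ (.neg ψ))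

def or (φ ψ : LProp S) : LProp S := .neg (.and (.neg φ) (.neg ψ))

/-- Boolean evaluation of a formula treating the basic formulas as atoms. -/
def evalB (v : LProp S → Prop) : LProp S → Prop
  | .neg φ => ¬ evalB v φ
  | .and φ ψ => evalB v φ ∧ evalB v ψ
  | .basic g X x => v (.basic g X x)

/-- Instances of propositional tautologies in `Lprop(S)`. -/
def Taut (φ : LProp S) : Prop := ∀ v : LProp S → Prop, evalB v φ

/-- Disjunction of a nonempty list of formulas. -/
def bigOrNe : LProp S → List (LProp S) → LProp S
  | φ, [] => φ
  | φ, ψ :: l => or φ (bigOrNe ψ l)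

end LProp

/-- The proof system AXun(S): C0 (propositional tautologies), C1 (equality),
C2 (definiteness), C3 (composition), C4 (effectiveness), C5 (reversibility),
with modus ponens. -/
inductive AXunProv (S : Signature) : LProp S → Prop
  | taut {φ : LProp S} : LProp.Taut φ → AXunProv S φ
  | c1 (g : S.Intervention) (X : S.endo) (x x' : S.range X) (h : x ≠ x') :
      AXunProv S (LProp.imp (.basic g X x) (.neg (.basic g X x')))
  | c2 (g : S.Intervention) (X : S.endo) (x0 : S.range X) (l : List (S.range X))
      (h : x0 :: l = (Finset.univ : Finset (S.range X)).toList) :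
      AXunProv S (LProp.bigOrNe (.basic g X x0) (l.map (fun x => LProp.basic g X x)))
  | c3 (g : S.Intervention) (W : S.endo) (w : S.range W) (Y : S.endo) (y : S.range Y)
      (hW : g W = none) :
      AXunProv S (LProp.imp (.and (.basic g W w) (.basic g Y y))
        (.basic (Function.update g W (some w)) Y y))
  | c4 (g : S.Intervention) (X : S.endo) (x : S.range X) (h : g X = some x) :
      AXunProv S (.basic g X x)
  | c5 (g : S.Intervention) (W : S.endo) (w : S.range W) (Y : S.endo) (y : S.range Y)
      (hne : Y ≠ W) (hW : g W = none) (hY : g Y = none) :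
      AXunProv S (LProp.imp
        (.and (.basic (Function.update g W (some w)) Y y)
              (.basic (Function.update g Y (some y)) W w))
        (.basic g Y y))
  | mp {φ ψ : LProp S} : AXunProv S (LProp.imp φ ψ) → AXunProv S φ → AXunProv S ψ

/-! ## The language Lex(S) -/

/-- Boolean combinations of atoms `X = x`. -/
inductive BForm (S : Signature) : Type
  | atom (X : S.endo) (x : S.range X) : BForm S
  | neg : BForm S → BForm S
  | and : BForm S → BForm S → BForm S

def BForm.holds {S : Signature} (a : S.Asgn) : BForm S → Prop
  | .atom X x => a X = x
  | .neg φ => ¬ BForm.holds a φ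
  | .and φ ψ => BForm.holds a φ ∧ BForm.holds a ψ

/-- `Lex(S)`: Boolean combinations of basic formulas `[Y⃗ ← y⃗]ψ`, where `ψ` is a
Boolean combination of atoms. -/
inductive LEx (S : Signature) : Type
  | basic (g : S.Intervention) (ψ : BForm S) : LEx S
  | neg : LEx S → LEx S
  | and : LEx S → LEx S → LEx S

/-- Satisfaction of `Lex(S)` formulas in a causal model, relative to a context. -/
def CausalModel.satEx {S : Signature} (T : CausalModel S) (u : S.Ctx) : LEx S → Prop
  | .basic g ψ => ∀ a : S.Asgn, T.isSolution g u a → ψ.holds a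
  | .neg φ => ¬ CausalModel.satEx T u φ
  | .and φ ψ => CausalModel.satEx T u φ ∧ CausalModel.satEx T u ψ

/-! ## The counterfactual language L^C(Φ) and the system AX -/

/-- The language `L^C(Φ)`: primitive propositions closed under `∧`, `¬` and the
counterfactual connective `>` (`cf`). -/
inductive CForm (Φ : Type) : Type
  | atom : Φ → CForm Φ
  | fls : CForm Φ
  | neg : CForm Φ → CForm Φ
  | and : CForm Φ → CForm Φ → CForm Φ
  | cf : CForm Φ → CForm Φ → CForm Φ

namespace CForm

variable {Φ : Type}

def tr : CForm Φ := neg fls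

def or (φ ψ : CForm Φ) : CForm Φ := neg (and (neg φ) (neg ψ))

def imp (φ ψ : CForm Φ) : CForm Φ := or (neg φ) ψ

def iff (φ ψ : CForm Φ) : CForm Φ := and (imp φ ψ) (imp ψ φ)

/-- Boolean evaluation treating atoms and counterfactuals as atomic. -/
def evalB (v : CForm Φ → Prop) : CForm Φ → Prop
  | fls => False
  | neg φ => ¬ evalB v φ
  | and φ ψ => evalB v φ ∧ evalB v ψ
  | atom p => v (atom p)
  | cf φ ψ => v (cf φ ψ)

/-- Instances of propositional tautologies in `L^C(Φ)`. -/
def Taut (φ : CForm Φ) : Prop := ∀ v : CForm Φ → Prop, evalB v φ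

def bigAnd : List (CForm Φ) → CForm Φ
  | [] => tr
  | [φ] => φ
  | φ :: l => and φ (bigAnd l)

def bigOr : List (CForm Φ) → CForm Φ
  | [] => fls
  | [φ] => φ
  | φ :: l => or φ (bigOr l)

end CForm

/-- Provability in the system AX (axioms A0–A6, rules MP, RA1, RA2), augmented
with an arbitrary set `extra` of additional axioms. -/
inductive AXProv (Φ : Type) (extra : CForm Φ → Prop) : CForm Φ → Prop
  | taut {φ} : CForm.Taut φ → AXProv Φ extra φ
  | ax {φ} : extra φ → AXProv Φ extra φ
  | a1 (φ) : AXProv Φ extra (CForm.cf φ φ)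
  | a2 (φ ψ1 ψ2) : AXProv Φ extra
      (CForm.imp (CForm.and (CForm.cf φ ψ1) (CForm.cf φ ψ2)) (CForm.cf φ (CForm.and ψ1 ψ2)))
  | a3 (φ1 φ2 ψ) : AXProv Φ extra
      (CForm.imp (CForm.and (CForm.cf φ1 φ2) (CForm.cf φ1 ψ)) (CForm.cf (CForm.and φ1 φ2) ψ))
  | a4 (φ1 φ2 ψ) : AXProv Φ extra
      (CForm.imp (CForm.and (CForm.cf φ1 ψ) (CForm.cf φ2 ψ)) (CForm.cf (CForm.or φ1 φ2) ψ))
  | a5 : AXProv Φ extra (CForm.neg (CForm.cf CForm.tr CForm.fls))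
  | a6 (φ ψ) : AXProv Φ extra (CForm.imp φ (CForm.iff ψ (CForm.cf φ ψ)))
  | mp {φ ψ} : AXProv Φ extra (CForm.imp φ ψ) → AXProv Φ extra φ → AXProv Φ extra ψ
  | ra1 {φ φ' ψ} : AXProv Φ extra (CForm.iff φ φ') →
      AXProv Φ extra (CForm.imp (CForm.cf φ ψ) (CForm.cf φ' ψ))
  | ra2 {ψ ψ' φ} : AXProv Φ extra (CForm.imp ψ ψ') →
      AXProv Φ extra (CForm.imp (CForm.cf φ ψ) (CForm.cf φ ψ'))

/-- The axiom scheme A7. -/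
def A7Scheme (Φ : Type) : CForm Φ → Prop := fun θ =>
  ∃ φ ψ1 ψ2 : CForm Φ, θ = CForm.imp (CForm.cf φ (CForm.or ψ1 ψ2))
    (CForm.or (CForm.cf φ ψ1) (CForm.cf φ ψ2))

/-- Satisfaction of `L^C(Φ)` formulas in a counterfactual structure. -/
def CStruct.satC {Φ : Type} (M : CStruct Φ) : M.World → CForm Φ → Prop
  | w, .atom p => M.val w p
  | _, .fls => False
  | w, .neg φ => ¬ CStruct.satC M w φ
  | w, .and φ ψ => CStruct.satC M w φ ∧ CStruct.satC M w ψ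
  | w, .cf φ ψ => ∀ v ∈ M.closest w (fun u => CStruct.satC M u φ), CStruct.satC M v ψ

/-! ## The signature with three binary endogenous variables -/

/-- The signature with endogenous variables `V = {X1, X2, X3}` (as `Fin 3`), each
with range `{0, 1}` (as `Fin 2`), and an arbitrary exogenous part. -/
abbrev S3 (E : Type) (eF : Fintype E) (er : E → Type)
    (erF : ∀ e, Fintype (er e)) (erN : ∀ e, Nonempty (er e)) : Signature :=
  { exo := E
    endo := Fin 3
    exoFin := eF
    endoFin := inferInstance
    endoDec := inferInstance
    exoRange := er
    range := fun _ => Fin 2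
    exoRangeFin := erF
    rangeFin := fun _ => inferInstance
    exoRangeNe := erN
    rangeNe := fun _ => ⟨0⟩ }

/-- The intervention `Xi ← 1`. -/
def gI {E : Type} {eF : Fintype E} {er : E → Type}
    {erF : ∀ e, Fintype (er e)} {erN : ∀ e, Nonempty (er e)}
    (i : Fin 3) : (S3 E eF er erF erN).Intervention :=
  fun j => if j = i then some (1 : Fin 2) else none

/-- The intervention `Xi ← 1; Xj ← 1`. -/
def gII {E : Type} {eF : Fintype E} {er : E → Type}
    {erF : ∀ e, Fintype (er e)} {erN : ∀ e, Nonempty (er e)}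
    (i j : Fin 3) : (S3 E eF er erF erN).Intervention :=
  fun k => if k = i ∨ k = j then some (1 : Fin 2) else none

/-- The formula φ : `[X1←1](X2 = 1) ∧ [X1←1](X3 = 0) ∧ [X2←1](X3 = 1) ∧
[X2←1](X1 = 0) ∧ [X3←1](X1 = 1) ∧ [X3←1](X2 = 0)`. -/
def phi3 {E : Type} {eF : Fintype E} {er : E → Type}
    {erF : ∀ e, Fintype (er e)} {erN : ∀ e, Nonempty (er e)} :
    LProp (S3 E eF er erF erN) :=
  .and (.basic (gI 0) 1 1) <| .and (.basic (gI 0) 2 0) <| .and (.basic (gI 1) 2 1) <|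
    .and (.basic (gI 1) 0 0) <| .and (.basic (gI 2) 0 1) (.basic (gI 2) 1 0)

/-! By recursiveness one of `W`, `Y` precedes the other in the variable order at the current
world. If `Y` precedes `W`, setting `W` does not affect `Y`, so the first conjunct is already
`[X⃗←x⃗](Y = y)`. If `W` precedes `Y`, setting `Y` does not affect `W`, so the second conjunct gives
`[X⃗←x⃗](W = w)`: the closest `X⃗ = x⃗` worlds then satisfy `W = w`, hence are also closest
`X⃗ = x⃗ ∧ W = w` worlds, where the first conjunct gives `Y = y`. -/

theorem CStruct.cfSat_cut {Φ : Type} (M : CStruct Φ) {w : M.World} {A B C : M.World → Prop}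
    (hC : M.cfSat w A C) (hB : M.cfSat w (fun v => A v ∧ C v) B) : M.cfSat w A B :=
  fun v hv => hB v ⟨hv.1, ⟨hv.2.1, hC v hv⟩, fun v' hv' => hv.2.2 v' hv'.1⟩

theorem intAnte_update_of_eq_none {S : Signature} (M : CStruct S.Atom) {g : S.Intervention}
    {X : S.endo} (hX : g X = none) (x : S.range X) :
    intAnte S M (Function.update g X (some x)) = fun v => intAnte S M g v ∧ M.val v ⟨X, x⟩ := by
  funext v
  refine propext ⟨fun hv => ⟨fun Z z hZ => hv Z z ?_, hv X x (by simp)⟩, ?_⟩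
  · rwa [Function.update_of_ne (by rintro rfl; simp [hX] at hZ)]
  · rintro ⟨hv, hvX⟩ Z z hZ
    rcases eq_or_ne Z X with rfl | hZX
    · obtain rfl : x = z := by simpa using hZ
      exact hvX
    · exact hv Z z (by rwa [Function.update_of_ne hZX] at hZ)

theorem satBasic_of_satBasic_update {S : Signature} {M : CStruct S.Atom} {w : M.World}
    {g : S.Intervention} {X Y : S.endo} {x : S.range X} {y : S.range Y} (hX : g X = none)
    (hx : satBasic S M w g X x) (hy : satBasic S M w (Function.update g X (some x)) Y y) :
    satBasic S M w g Y y := by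
  rw [satBasic, intAnte_update_of_eq_none M hX] at hy
  exact M.cfSat_cut hx hy

/-- Every instance of C5 (Reversibility),
`([X⃗←x⃗; W←w](Y = y) ∧ [X⃗←x⃗; Y←y](W = w)) → [X⃗←x⃗](Y = y)` for distinct
`Y ≠ W` not occurring in `X⃗`, is valid with respect to the class `Mrec(Φ_S)`
of recursive counterfactual structures. -/
theorem stmt5 (S : Signature) (M : CStruct S.Atom) (hM : MRec S M)
    (w : M.World) (g : S.Intervention) (W Y : S.endo) (hne : Y ≠ W)
    (hW : g W = none) (hY : g Y = none) (wv : S.range W) (y : S.range Y) :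
    satBasic S M w (Function.update g W (some wv)) Y y →
    satBasic S M w (Function.update g Y (some y)) W wv →
    satBasic S M w g Y y := by
  intro hYy hWw
  obtain ⟨vlt, hvlt, hindep⟩ := hM.2.2.2 w
  by_cases hWY : vlt W Y
  · exact satBasic_of_satBasic_update hW ((hindep W Y hWY g hW hY y wv).mp hWw) hYy
  by_cases hYW : vlt Y W
  · exact (hindep Y W hYW g hY hW wv y).mp hYy
  exact absurd (hvlt.trichotomous W Y hWY hYW).symm hne
end

section
/- For every recursive counterfactual structure M ∈ Mrec(Φ_S) and every world w of M, there exists a recursive causal model T ∈ Trec(S) such that for all formulas φ ∈ Lprop(S) and all contexts u⃗: (M, w) ⊨ φ if and only if (T, u⃗) ⊨ φ. -/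
/-! In a full structure of `M⁺` every antecedent `Y⃗ = y⃗` has a unique closest world, so
`(M, w)` assigns to each intervention `g` an outcome `A g`, and `[g](X = x)` holds iff
`A g X = x`. This outcome map is effective, satisfies composition, and intervening on a variable
does not change the outcome of the variables preceding it in the order `≺` given by
recursiveness. Let the equation of `X` return `(A t) X`, where `t` sets each predecessor of `X`
to its current value. By composition and recursiveness `A g` solves the equations of this
recursive model under `g`, and by induction along `≺` it is their only solution. -/

open Function

namespace CStruct

variable {Φ : Type} (M : CStruct Φ)

theorem closest_nonempty {w : M.World} {P : M.World → Prop} (h : ∃ v, M.inW w v ∧ P v) :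
    (M.closest w P).Nonempty := by
  let r : M.World → M.World → Prop := fun u v => M.inW w u ∧ M.inW w v ∧ M.lt w u v
  have : Std.Irrefl r := ⟨fun u hu => hu.2.2.2 hu.2.2.1⟩
  have : IsTrans M.World r := ⟨fun a b c hab hbc =>
    ⟨hab.1, hbc.2.1, M.trans_on w a b c hab.1 hab.2.1 hbc.2.1 hab.2.2.1 hbc.2.2.1,
      fun hca => hbc.2.2.2 (M.trans_on w c a b hbc.2.1 hab.1 hab.2.1 hca hab.2.2.1)⟩⟩
  obtain ⟨m, ⟨hmW, hmP⟩, hmin⟩ := (Finite.wellFounded_of_trans_of_irrefl r).has_min _ h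
  exact ⟨m, hmW, hmP, fun v hv hlt => hmin v ⟨⟨m, hlt.1⟩, hv⟩ ⟨⟨m, hlt.1⟩, hmW, hlt⟩⟩

theorem closest_subsingleton (hT : M.totalOrd) (w : M.World) (P : M.World → Prop) :
    (M.closest w P).Subsingleton := by
  rintro v ⟨hvW, hvP, hvmin⟩ v' ⟨hv'W, hv'P, hv'min⟩
  by_contra hne
  rcases hT w v v' hvW hv'W hne with h | h
  exacts [hv'min v hvP h, hvmin v' hv'P h]

variable {M}

theorem mem_closest_of_imp {w v : M.World} {P Q : M.World → Prop} (hv : v ∈ M.closest w P)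
    (hQP : ∀ u, Q u → P u) (hQv : Q v) : v ∈ M.closest w Q :=
  ⟨hv.1, hQv, fun v' hv' => hv.2.2 v' (hQP v' hv')⟩

theorem cfSat_iff_of_closest_eq {w v : M.World} {P : M.World → Prop} (Q : M.World → Prop)
    (h : M.closest w P = {v}) : M.cfSat w P Q ↔ Q v := by
  simp only [cfSat, h, Set.mem_singleton_iff, forall_eq]

end CStruct

section Outcome

variable {S : Signature}

/-- Effectiveness, composition and recursiveness (along `vlt`) of the map sending an
intervention to the resulting values of all variables. -/
structure IsRecursiveOutcome (vlt : S.endo → S.endo → Prop) (A : S.Intervention → S.Asgn) :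
    Prop where
  apply_of_eq_some : ∀ {g X x}, g X = some x → A g X = x
  apply_update_apply_of_eq_none : ∀ {g Z}, g Z = none → A (update g Z (some (A g Z))) = A g
  apply_update_some_of_lt : ∀ {W Y}, vlt W Y → ∀ {g : S.Intervention}, g W = none →
    g Y = none → ∀ y, A (update g Y (some y)) W = A g W

open Classical in
noncomputable def setBelow (vlt : S.endo → S.endo → Prop) (X : S.endo) (c : S.Asgn) :
    S.Intervention :=
  fun Z => if vlt Z X then some (c Z) else none

theorem setBelow_congr {vlt : S.endo → S.endo → Prop} {X : S.endo} {c c' : S.Asgn}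
    (h : ∀ Z, vlt Z X → c Z = c' Z) : setBelow vlt X c = setBelow vlt X c' := by
  funext Z
  by_cases hZ : vlt Z X <;> simp [setBelow, hZ, h]

namespace IsRecursiveOutcome

variable {vlt : S.endo → S.endo → Prop} {A : S.Intervention → S.Asgn}

theorem apply_update_apply (hA : IsRecursiveOutcome vlt A) (g : S.Intervention) (Z : S.endo) :
    A (update g Z (some (A g Z))) = A g := by
  cases hZ : g Z with
  | none => exact hA.apply_update_apply_of_eq_none hZ
  | some z => rw [hA.apply_of_eq_some hZ, ← hZ, update_eq_self]

theorem apply_update_of_lt [Std.Irrefl vlt] (hA : IsRecursiveOutcome vlt A) {W Y : S.endo}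
    (hWY : vlt W Y) (g : S.Intervention) (o : Option (S.range Y)) :
    A (update g Y o) W = A g W := by
  have hne : W ≠ Y := ne_of_irrefl hWY
  suffices h : ∀ o, A (update g Y o) W = A (update g Y none) W by
    rw [h, ← h (g Y), update_eq_self]
  intro o
  cases o with
  | none => rfl
  | some y =>
    rw [← update_idem (a := Y) none (some y) g]
    cases hW : g W with
    | none => exact hA.apply_update_some_of_lt hWY (by simpa [hne]) (update_self ..) y
    | some z =>
      rw [hA.apply_of_eq_some (by simpa [hne]), hA.apply_of_eq_some (by simpa [hne])]

theorem apply_piecewise_self (hA : IsRecursiveOutcome vlt A) (g : S.Intervention)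
    (s : Finset S.endo) : A (s.piecewise (fun Z => some (A g Z)) g) = A g := by
  classical
  induction s using Finset.induction_on with
  | empty => rw [Finset.piecewise_empty]
  | insert j s _ ih =>
    rw [Finset.piecewise_insert, ← congrFun ih j, hA.apply_update_apply, ih]

theorem apply_piecewise_of_lt [Std.Irrefl vlt] (hA : IsRecursiveOutcome vlt A) {W : S.endo}
    (s : Finset S.endo) (hs : ∀ Z ∈ s, vlt W Z) (f g : S.Intervention) :
    A (s.piecewise f g) W = A g W := by
  classical
  induction s using Finset.induction_on with
  | empty => rw [Finset.piecewise_empty]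
  | insert j s _ ih =>
    rw [Finset.piecewise_insert, hA.apply_update_of_lt (hs j (Finset.mem_insert_self j s)),
      ih fun Z hZ => hs Z (Finset.mem_insert_of_mem hZ)]

theorem apply_eq_apply_setBelow [IsStrictTotalOrder S.endo vlt] (hA : IsRecursiveOutcome vlt A)
    {g : S.Intervention} {X : S.endo} (hgX : g X = none) :
    A g X = A (setBelow vlt X (A g)) X := by
  classical
  -- `c` refines `g` by the current values of the predecessors of `X`, and agrees with
  -- `setBelow vlt X (A g)` except on successors of `X`.
  set c := (Finset.univ.filter (vlt · X)).piecewise (fun Z => some (A g Z)) g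
  have hc : (Finset.univ.filter (vlt X ·)).piecewise (setBelow vlt X (A g)) c
      = setBelow vlt X (A g) := by
    funext Z
    by_cases hXZ : vlt X Z
    · simp [hXZ]
    · rcases trichotomous_of vlt Z X with hZX | rfl | hZX
      · simp [c, setBelow, hXZ, hZX]
      · simp [c, setBelow, hgX, irrefl_of vlt Z]
      · exact absurd hZX hXZ
  calc A g X = A c X := (congrFun (hA.apply_piecewise_self g _) X).symm
    _ = A ((Finset.univ.filter (vlt X ·)).piecewise (setBelow vlt X (A g)) c) X :=
      (hA.apply_piecewise_of_lt _ (fun Z hZ => by simpa using hZ) _ _).symm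
    _ = A (setBelow vlt X (A g)) X := by rw [hc]

end IsRecursiveOutcome

noncomputable def fillAt (X : S.endo) (b : ∀ Y : {Y : S.endo // Y ≠ X}, S.range Y.1) :
    S.Asgn :=
  fun Z => if h : Z = X then Classical.arbitrary _ else b ⟨Z, h⟩

theorem fillAt_of_ne {X Z : S.endo} (b : ∀ Y : {Y : S.endo // Y ≠ X}, S.range Y.1) (h : Z ≠ X) :
    fillAt X b Z = b ⟨Z, h⟩ :=
  dif_neg h

noncomputable def CausalModel.ofOutcome (vlt : S.endo → S.endo → Prop)
    (A : S.Intervention → S.Asgn) : CausalModel S :=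
  ⟨fun X _ b => A (setBelow vlt X (fillAt X b)) X⟩

namespace CausalModel

variable {vlt : S.endo → S.endo → Prop} {A : S.Intervention → S.Asgn}

theorem ofOutcome_F_restrict [Std.Irrefl vlt] (X : S.endo) (u : S.Ctx) (a : S.Asgn) :
    (ofOutcome vlt A).F X u (fun Y => a Y.1) = A (setBelow vlt X a) X := by
  show A (setBelow vlt X (fillAt X _)) X = _
  rw [setBelow_congr fun Z hZ => fillAt_of_ne _ (ne_of_irrefl hZ)]

theorem ofOutcome_recursive [IsStrictTotalOrder S.endo vlt] : (ofOutcome vlt A).Recursive := by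
  refine ⟨vlt, inferInstance, fun X Y hXY u b b' hbb' => ?_⟩
  show A (setBelow vlt X (fillAt X b)) X = A (setBelow vlt X (fillAt X b')) X
  refine congrArg (A · X) (setBelow_congr fun Z hZX => ?_)
  have hZY : Z ≠ Y := by
    rintro rfl
    exact asymm hXY hZX
  rw [fillAt_of_ne b (ne_of_irrefl hZX), fillAt_of_ne b' (ne_of_irrefl hZX), hbb' ⟨Z, _⟩ hZY]

theorem isSolution_ofOutcome_iff [IsStrictTotalOrder S.endo vlt]
    (hA : IsRecursiveOutcome vlt A) {g : S.Intervention} {u : S.Ctx} {a : S.Asgn} :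
    (ofOutcome vlt A).isSolution g u a ↔ a = A g := by
  constructor
  · intro ha
    funext X
    induction X using (Finite.wellFounded_of_trans_of_irrefl vlt).induction with
    | h X ih =>
      cases hgX : g X with
      | some x => rw [(ha X).1 x hgX, hA.apply_of_eq_some hgX]
      | none =>
        rw [(ha X).2 hgX, ofOutcome_F_restrict, setBelow_congr ih,
          ← hA.apply_eq_apply_setBelow hgX]
  · rintro rfl X
    refine ⟨fun x => hA.apply_of_eq_some, fun hgX => ?_⟩
    rw [ofOutcome_F_restrict]
    exact hA.apply_eq_apply_setBelow hgX

end CausalModel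

end Outcome

section Counterfactual

variable {S : Signature} {M : CStruct S.Atom}

theorem satBasic_of_eq_some {w : M.World} {g : S.Intervention} {X : S.endo} {x : S.range X}
    (h : g X = some x) : satBasic S M w g X x :=
  fun _ hv => hv.2.1 X x h

theorem intAnte_update_iff {g : S.Intervention} {Z : S.endo} {z : S.range Z} {v : M.World}
    (hg : g Z = none) :
    intAnte S M (update g Z (some z)) v ↔ intAnte S M g v ∧ M.val v ⟨Z, z⟩ := by
  constructor
  · intro h
    refine ⟨fun Y y hY => h Y y ?_, h Z z (update_self ..)⟩
    have hYZ : Y ≠ Z := by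
      rintro rfl
      simp [hg] at hY
    rwa [update_of_ne hYZ]
  · rintro ⟨h, hz⟩ Y y hY
    by_cases hYZ : Y = Z
    · subst hYZ
      obtain rfl : z = y := by simpa using hY
      exact hz
    · exact h Y y (by rwa [update_of_ne hYZ] at hY)

theorem exists_closest_intAnte_eq_singleton (hF : Full S M) (hT : M.totalOrd) (w : M.World)
    (g : S.Intervention) : ∃ v, M.closest w (intAnte S M g) = {v} := by
  refine Set.exists_eq_singleton_iff_nonempty_subsingleton.mpr
    ⟨M.closest_nonempty ?_, M.closest_subsingleton hT w _⟩
  obtain ⟨v, hvW, hv⟩ := hF w fun Z => (g Z).getD (Classical.arbitrary _)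
  exact ⟨v, hvW, fun Y y hY => by simpa [hY] using hv Y⟩

theorem existsUnique_satBasic (hA : Acceptable S M) (hF : Full S M) (hT : M.totalOrd)
    (w : M.World) (g : S.Intervention) (X : S.endo) : ∃! x, satBasic S M w g X x := by
  obtain ⟨v, hv⟩ := exists_closest_intAnte_eq_singleton hF hT w g
  simpa only [satBasic, CStruct.cfSat_iff_of_closest_eq _ hv] using hA v X

noncomputable def cfOutcome (M : CStruct S.Atom) (w : M.World) (g : S.Intervention) : S.Asgn :=
  fun X => Classical.epsilon (satBasic S M w g X)

variable (hA : Acceptable S M) (hF : Full S M) (hT : M.totalOrd)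
include hA hF hT

theorem satBasic_iff_cfOutcome_eq {w : M.World} {g : S.Intervention} {X : S.endo}
    {x : S.range X} : satBasic S M w g X x ↔ cfOutcome M w g X = x := by
  have h := existsUnique_satBasic hA hF hT w g X
  constructor
  · exact h.unique (Classical.epsilon_spec h.exists)
  · rintro rfl
    exact Classical.epsilon_spec h.exists

theorem cfOutcome_update_cfOutcome {w : M.World} {g : S.Intervention} {Z : S.endo}
    (hg : g Z = none) :
    cfOutcome M w (update g Z (some (cfOutcome M w g Z))) = cfOutcome M w g := by
  obtain ⟨v, hv⟩ := exists_closest_intAnte_eq_singleton hF hT w g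
  have hvg : v ∈ M.closest w (intAnte S M g) := hv ▸ rfl
  have hvZ : M.val v ⟨Z, cfOutcome M w g Z⟩ :=
    (CStruct.cfSat_iff_of_closest_eq _ hv).mp ((satBasic_iff_cfOutcome_eq hA hF hT).mpr rfl)
  have hv'mem : v ∈ M.closest w (intAnte S M (update g Z (some (cfOutcome M w g Z)))) :=
    CStruct.mem_closest_of_imp hvg (fun u hu => ((intAnte_update_iff hg).mp hu).1)
      ((intAnte_update_iff hg).mpr ⟨hvg.2.1, hvZ⟩)
  have hv' : M.closest w (intAnte S M (update g Z (some (cfOutcome M w g Z)))) = {v} :=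
    Set.eq_singleton_iff_unique_mem.mpr
      ⟨hv'mem, fun u hu => M.closest_subsingleton hT w _ hu hv'mem⟩
  funext X
  refine (satBasic_iff_cfOutcome_eq hA hF hT).mp ((CStruct.cfSat_iff_of_closest_eq _ hv').mpr ?_)
  exact (CStruct.cfSat_iff_of_closest_eq _ hv).mp ((satBasic_iff_cfOutcome_eq hA hF hT).mpr rfl)

end Counterfactual

theorem isRecursiveOutcome_cfOutcome {S : Signature} {M : CStruct S.Atom} (hM : MRec S M)
    (w : M.World) :
    ∃ vlt, IsStrictTotalOrder S.endo vlt ∧ IsRecursiveOutcome vlt (cfOutcome M w) := by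
  obtain ⟨hA, hF, hT, hrec⟩ := hM
  obtain ⟨vlt, hvlt, hind⟩ := hrec w
  have key {g X x} := satBasic_iff_cfOutcome_eq hA hF hT (w := w) (g := g) (X := X) (x := x)
  exact ⟨vlt, hvlt, fun h => key.mp (satBasic_of_eq_some h),
    fun hg => cfOutcome_update_cfOutcome hA hF hT hg,
    fun hWY g hW hY y => key.mp ((hind _ _ hWY g hW hY y _).mpr (key.mpr rfl))⟩

theorem satL_iff_sat_of_forall_basic {S : Signature} {M : CStruct S.Atom} {w : M.World}
    {T : CausalModel S} {u : S.Ctx}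
    (h : ∀ g X x, satBasic S M w g X x ↔ T.sat u (.basic g X x)) (φ : LProp S) :
    satL M w φ ↔ T.sat u φ := by
  induction φ with
  | basic g X x => exact h g X x
  | neg φ ih => exact not_congr ih
  | and φ ψ ihφ ihψ => exact and_congr ihφ ihψ

/-- For every recursive counterfactual structure `M ∈ Mrec(Φ_S)`
and world `w` there is a recursive causal model `T ∈ Trec(S)` such that for all
`φ ∈ Lprop(S)` and all contexts `u⃗`: `(M, w) ⊨ φ` iff `(T, u⃗) ⊨ φ`. -/
theorem stmt8 (S : Signature) (M : CStruct S.Atom) (hM : MRec S M) (w : M.World) :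
    ∃ T : CausalModel S, T.Recursive ∧
      ∀ (φ : LProp S) (u : S.Ctx), satL M w φ ↔ T.sat u φ := by
  obtain ⟨vlt, _, hA⟩ := isRecursiveOutcome_cfOutcome hM w
  refine ⟨.ofOutcome vlt (cfOutcome M w), CausalModel.ofOutcome_recursive,
    fun φ u => satL_iff_sat_of_forall_basic (fun g X x => ?_) φ⟩
  simp only [satBasic_iff_cfOutcome_eq hM.1 hM.2.1 hM.2.2.1, CausalModel.sat,
    CausalModel.isSolution_ofOutcome_iff hA, forall_eq]
end
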